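/- Linear Fourier attention equals linear time attention: for real matrices q, k, v of size L×D, W^H · ((W·q) · conj(W·k)^T · (W·v)) = q · k^T · v, where W is the normalized DFT matrix. -/
import Mathlib

open Matrix Complex Finset

noncomputable def dftMatrix (L : ℕ) : Matrix (Fin L) (Fin L) ℂ :=
  fun j k => Complex.exp (-2 * Real.pi * Complex.I / L) ^ ((j : ℕ) * (k : ℕ)) / Real.sqrt L

lemma dft_unitary (L : ℕ) (hL : 0 < L) : (dftMatrix L)ᴴ * dftMatrix L = 1 := by
  set ζ : ℂ := Complex.exp (2 * Real.pi * Complex.I / L) with hζdef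
  have hprim : IsPrimitiveRoot ζ L := Complex.isPrimitiveRoot_exp L hL.ne'
  have hζ0 : ζ ≠ 0 := Complex.exp_ne_zero _
  have hζinv : Complex.exp (-2 * Real.pi * Complex.I / L) = ζ⁻¹ := by
    rw [hζdef, ← Complex.exp_neg]; ring_nf
  have hstar : star ζ⁻¹ = ζ := by
    rw [← Complex.exp_neg, Complex.star_def, ← Complex.exp_conj, hζdef]
    congr 1
    simp [Complex.conj_ofReal, map_ofNat]
    ring
  have hsqrt : ((Real.sqrt L : ℝ) : ℂ) * ((Real.sqrt L : ℝ) : ℂ) = (L : ℂ) := by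
    rw [← Complex.ofReal_mul, Real.mul_self_sqrt (Nat.cast_nonneg L)]
    norm_cast
  have hLne : (L : ℂ) ≠ 0 := Nat.cast_ne_zero.mpr hL.ne'
  ext j k
  rw [Matrix.mul_apply, Matrix.one_apply]
  have hterm : ∀ m : Fin L, (dftMatrix L)ᴴ j m * dftMatrix L m k
      = (ζ ^ ((j : ℤ) - (k : ℤ))) ^ (m : ℕ) / L := by
    intro m
    rw [Matrix.conjTranspose_apply, dftMatrix, dftMatrix]
    simp only [hζinv]
    rw [star_div₀, star_pow, hstar, Complex.star_def, Complex.conj_ofReal,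
      div_mul_div_comm, hsqrt]
    congr 1
    rw [← zpow_natCast (ζ ^ ((j : ℤ) - (k : ℤ))), ← _root_.zpow_mul,
      ← zpow_natCast ζ ((m : ℕ) * (j : ℕ)), ← zpow_natCast ζ⁻¹ ((m : ℕ) * (k : ℕ)),
      _root_.inv_zpow, ← _root_.zpow_neg, ← zpow_add₀ hζ0]
    congr 1
    push_cast
    ring
  rw [Finset.sum_congr rfl (fun m _ => hterm m), ← Finset.sum_div]
  by_cases h : j = k
  · subst h
    rw [if_pos rfl]
    simp only [sub_self, zpow_zero, one_pow]
    rw [Finset.sum_const, Finset.card_univ, Fintype.card_fin, nsmul_eq_mul, mul_one,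
      div_self hLne]
  · rw [if_neg h]
    set w : ℂ := ζ ^ ((j : ℤ) - (k : ℤ)) with hw
    have hwne : w ≠ 1 := by
      intro hw1
      have hdvd := (hprim.zpow_eq_one_iff_dvd _).mp hw1
      have habs : |(j : ℤ) - (k : ℤ)| < L := by
        have hj := j.isLt; have hk := k.isLt
        rw [abs_lt]; omega
      have h0 := Int.eq_zero_of_abs_lt_dvd hdvd habs
      exact h (Fin.ext (by omega))
    have hsum : ∑ m : Fin L, w ^ (m : ℕ) = ∑ m ∈ Finset.range L, w ^ m :=
      Fin.sum_univ_eq_sum_range _ _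
    rw [hsum, geom_sum_eq hwne]
    have hwL : w ^ L = 1 := by
      rw [hw, ← zpow_natCast, ← _root_.zpow_mul, mul_comm, _root_.zpow_mul,
        zpow_natCast, hprim.pow_eq_one, _root_.one_zpow]
    rw [hwL, sub_self, zero_div, zero_div]

theorem fourier_linear_attention_eq_time (L D : ℕ) (hL : 0 < L)
    (q k v : Matrix (Fin L) (Fin D) ℝ) :
    let W := dftMatrix L
    let qc := q.map (Complex.ofReal)
    let kc := k.map (Complex.ofReal)
    let vc := v.map (Complex.ofReal)
    Wᴴ * ((W * qc) * ((W * kc).map (starRingEnd ℂ))ᵀ * (W * vc)) = qc * kcᵀ * vc := by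
  intro W qc kc vc
  have hconj : ((W * kc).map (starRingEnd ℂ))ᵀ = kcᵀ * Wᴴ := by
    have h1 : ((W * kc).map (starRingEnd ℂ))ᵀ = (W * kc)ᴴ := rfl
    rw [h1, Matrix.conjTranspose_mul]
    congr 1
    ext i j
    simp [kc, Matrix.conjTranspose_apply, Complex.conj_ofReal]
  rw [hconj]
  have hU := dft_unitary L hL
  calc Wᴴ * (W * qc * (kcᵀ * Wᴴ) * (W * vc))
      = (Wᴴ * W) * qc * (kcᵀ * ((Wᴴ * W) * vc)) := by
        simp only [Matrix.mul_assoc]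
    _ = qc * kcᵀ * vc := by rw [hU, Matrix.one_mul, Matrix.one_mul, Matrix.mul_assoc]
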